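/- For every d ≥ 1 one has θ_{d+1}* ≤ θ_d*; that is, the infimum of 𝓘[f]𝓓[f]/𝓠[f]² over admissible densities on ℝ^{d+1} is at most the corresponding infimum over admissible densities on ℝ^d (as an inequality of infima in ℝ ∪ {−∞}). -/

import Mathlib

open MeasureTheory Real Filter

noncomputable section

/-- Partial derivative `∂ᵢ f`. -/
def pder {d : ℕ} (i : Fin d) (f : (Fin d → ℝ) → ℝ) : (Fin d → ℝ) → ℝ :=
  fun x => fderiv ℝ f x (Pi.single i 1)

/-- Negated logarithmic Hessian `(H_f)ᵢⱼ = −∂ᵢ∂ⱼ log f`. -/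
def logHess {d : ℕ} (f : (Fin d → ℝ) → ℝ) (i j : Fin d) : (Fin d → ℝ) → ℝ :=
  fun x => -(pder i (pder j (fun y => Real.log (f y))) x)

/-- `𝓘[f] = ∫ tr(H_f) f`. -/
def calI (d : ℕ) (f : (Fin d → ℝ) → ℝ) : ℝ :=
  ∫ x, (∑ i, logHess f i i x) * f x

/-- `𝓠[f] = ∫ tr(H_f²) f`. -/
def calQ (d : ℕ) (f : (Fin d → ℝ) → ℝ) : ℝ :=
  ∫ x, (∑ i, ∑ j, logHess f i j x * logHess f j i x) * f x

/-- `𝓓[f] = ∫ (|∇H_f|² + 2 tr(H_f³)) f`. -/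
def calD (d : ℕ) (f : (Fin d → ℝ) → ℝ) : ℝ :=
  ∫ x, ((∑ i, ∑ j, ∑ k, (pder k (logHess f i j) x) ^ 2) +
        2 * ∑ i, ∑ j, ∑ k, logHess f i j x * logHess f j k x * logHess f k i x) * f x

/-- A density is admissible if it is smooth, strictly positive, integrates to one, it and all
its partial derivatives up to order 3 are bounded by `C e^{−c|x|²}`, and `𝓠[f] > 0`. -/
def Admissible (d : ℕ) (f : (Fin d → ℝ) → ℝ) : Prop :=
  ContDiff ℝ (⊤ : ℕ∞) f ∧ (∀ x, 0 < f x) ∧ (∫ x, f x) = 1 ∧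
  (∃ C > (0:ℝ), ∃ c > (0:ℝ), ∀ n : ℕ, n ≤ 3 → ∀ x,
    ‖iteratedFDeriv ℝ n f x‖ ≤ C * Real.exp (-c * ∑ i, x i ^ 2)) ∧
  0 < calQ d f

/-- The sharp constant `θ_d* = inf { 𝓘[f]𝓓[f]/𝓠[f]² : f admissible on ℝ^d }`,
the infimum taken in `ℝ ∪ {−∞}` (realized inside `EReal`). -/
def thetaStar (d : ℕ) : EReal :=
  sInf {x : EReal | ∃ f : (Fin d → ℝ) → ℝ, Admissible d f ∧
    x = ((calI d f * calD d f / (calQ d f) ^ 2 : ℝ) : EReal)}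

namespace ThetaAux

lemma contDiff_pder {d : ℕ} {F : (Fin d → ℝ) → ℝ} (hF : ContDiff ℝ (⊤ : ℕ∞) F) (i : Fin d) :
    ContDiff ℝ (⊤ : ℕ∞) (pder i F) := by
  have h1 : ContDiff ℝ (⊤ : ℕ∞) (fderiv ℝ F) := hF.fderiv_right (by simp)
  exact h1.clm_apply contDiff_const

lemma pder_add {d : ℕ} {F G : (Fin d → ℝ) → ℝ} (hF : Differentiable ℝ F)
    (hG : Differentiable ℝ G) (j : Fin d) :
    pder j (fun y => F y + G y) = fun y => pder j F y + pder j G y := by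
  funext y
  simp only [pder]
  rw [fderiv_fun_add (hF y) (hG y)]
  rfl

lemma pder_const {d : ℕ} (j : Fin d) (c : ℝ) : pder j (fun _ => c) = fun _ => 0 := by
  funext y; simp [pder]

def resL (d : ℕ) : ((Fin (d+1)) → ℝ) →L[ℝ] ((Fin d) → ℝ) :=
  ContinuousLinearMap.pi fun i => ContinuousLinearMap.proj i.castSucc

@[simp] lemma resL_apply {d : ℕ} (y : Fin (d+1) → ℝ) (i : Fin d) :
    resL d y i = y i.castSucc := rfl

lemma resL_single_cs {d : ℕ} (i : Fin d) :
    resL d (Pi.single i.castSucc (1:ℝ)) = Pi.single i 1 := by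
  funext k
  simp [Pi.single_apply, Fin.castSucc_inj]

lemma resL_single_last {d : ℕ} :
    resL d (Pi.single (Fin.last d) (1:ℝ)) = 0 := by
  funext k
  simp [Pi.single_apply, (Fin.castSucc_lt_last k).ne]

lemma norm_resL_le {d : ℕ} : ‖resL d‖ ≤ 1 := by
  refine ContinuousLinearMap.opNorm_le_bound _ zero_le_one (fun y => ?_)
  rw [one_mul]
  refine (pi_norm_le_iff_of_nonneg (norm_nonneg y)).2 (fun i => ?_)
  simpa using norm_le_pi_norm y i.castSucc

lemma pder_comp_cs {d : ℕ} {F : (Fin d → ℝ) → ℝ} (hF : Differentiable ℝ F) (i : Fin d) :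
    pder i.castSucc (fun y => F (resL d y)) = fun y => pder i F (resL d y) := by
  funext y
  have h : (fun y => F (resL d y)) = F ∘ (resL d) := rfl
  simp only [pder, h]
  rw [fderiv_comp y (hF (resL d y)) ((resL d).differentiableAt)]
  simp only [ContinuousLinearMap.fderiv, ContinuousLinearMap.coe_comp', Function.comp_apply]
  rw [resL_single_cs]

lemma pder_comp_last {d : ℕ} {F : (Fin d → ℝ) → ℝ} (hF : Differentiable ℝ F) :
    pder (Fin.last d) (fun y => F (resL d y)) = fun _ => 0 := by
  funext y
  have h : (fun y => F (resL d y)) = F ∘ (resL d) := rfl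
  simp only [pder, h]
  rw [fderiv_comp y (hF (resL d y)) ((resL d).differentiableAt)]
  simp only [ContinuousLinearMap.fderiv, ContinuousLinearMap.coe_comp', Function.comp_apply]
  rw [resL_single_last, map_zero]

lemma pder_e_cs {d : ℕ} {φ : ℝ → ℝ} (hφ : Differentiable ℝ φ) (i : Fin d) :
    pder i.castSucc (fun y : Fin (d+1) → ℝ => φ (y (Fin.last d))) = fun _ => 0 := by
  funext y
  have h : (fun y : Fin (d+1) → ℝ => φ (y (Fin.last d)))
      = φ ∘ (ContinuousLinearMap.proj (R := ℝ) (φ := fun _ : Fin (d+1) => ℝ) (Fin.last d)) := rfl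
  simp only [pder, h]
  rw [fderiv_comp y (hφ (y (Fin.last d))) (ContinuousLinearMap.differentiableAt _)]
  simp only [ContinuousLinearMap.fderiv, ContinuousLinearMap.coe_comp', Function.comp_apply]
  have h2 : (ContinuousLinearMap.proj (R := ℝ) (φ := fun _ : Fin (d+1) => ℝ) (Fin.last d))
      (Pi.single i.castSucc (1:ℝ)) = 0 := by
    simp [Pi.single_apply, (Fin.castSucc_lt_last i).ne']
  rw [h2, map_zero]

lemma pder_e_last {d : ℕ} {φ : ℝ → ℝ} (hφ : Differentiable ℝ φ) :
    pder (Fin.last d) (fun y : Fin (d+1) → ℝ => φ (y (Fin.last d)))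
      = fun y => deriv φ (y (Fin.last d)) := by
  funext y
  have h : (fun y : Fin (d+1) → ℝ => φ (y (Fin.last d)))
      = φ ∘ (ContinuousLinearMap.proj (R := ℝ) (φ := fun _ : Fin (d+1) => ℝ) (Fin.last d)) := rfl
  simp only [pder, h]
  rw [fderiv_comp y (hφ (y (Fin.last d))) (ContinuousLinearMap.differentiableAt _)]
  simp only [ContinuousLinearMap.fderiv, ContinuousLinearMap.coe_comp', Function.comp_apply]
  have h2 : (ContinuousLinearMap.proj (R := ℝ) (φ := fun _ : Fin (d+1) => ℝ) (Fin.last d))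
      (Pi.single (Fin.last d) (1:ℝ)) = 1 := by simp
  rw [h2, ← fderiv_apply_one_eq_deriv]
  rfl

def gc (a : ℝ) : ℝ := Real.sqrt (a / (2 * π))

def gauss (a : ℝ) : ℝ → ℝ := fun t => gc a * Real.exp (-(a/2) * t^2)

variable {a : ℝ}

lemma gc_pos (ha : 0 < a) : 0 < gc a :=
  Real.sqrt_pos.2 (div_pos ha (by positivity))

lemma gauss_pos (ha : 0 < a) (t : ℝ) : 0 < gauss a t :=
  mul_pos (gc_pos ha) (Real.exp_pos _)

lemma gauss_contDiff : ContDiff ℝ (⊤ : ℕ∞) (gauss a) :=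
  contDiff_const.mul ((contDiff_const.mul (contDiff_id.pow 2)).exp)

lemma integral_gauss (ha : 0 < a) : ∫ t : ℝ, gauss a t = 1 := by
  have h := integral_gaussian (a/2)
  unfold gauss gc
  rw [MeasureTheory.integral_const_mul]
  have : ∀ t : ℝ, -(a/2) * t^2 = -((a/2) * t^2) := fun t => by ring
  simp only [this] at *
  rw [h, ← Real.sqrt_mul (by positivity)]
  rw [show a / (2 * π) * (π / (a/2)) = 1 by field_simp]
  exact Real.sqrt_one

lemma log_gauss (ha : 0 < a) (t : ℝ) :
    Real.log (gauss a t) = Real.log (gc a) + (-(a/2) * t^2) := by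
  unfold gauss
  rw [Real.log_mul (gc_pos ha).ne' (Real.exp_pos _).ne', Real.log_exp]

lemma gauss_iteratedDeriv_poly (n : ℕ) :
    ∃ p : Polynomial ℝ, ∀ t, iteratedDeriv n (gauss a) t
      = p.eval t * Real.exp (-(a/2) * t^2) := by
  induction n with
  | zero =>
    exact ⟨Polynomial.C (gc a), fun t => by simp [gauss]⟩
  | succ n ih =>
    obtain ⟨p, hp⟩ := ih
    refine ⟨p.derivative + Polynomial.C (-a) * (Polynomial.X * p), fun t => ?_⟩
    rw [iteratedDeriv_succ, funext hp]
    have h1 : HasDerivAt (fun t : ℝ => -(a/2) * t^2) (-(a/2) * (2 * t)) t := by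
      simpa using (hasDerivAt_pow 2 t).const_mul (-(a/2))
    have h2 : HasDerivAt (fun t : ℝ => p.eval t * Real.exp (-(a/2) * t^2))
        (p.derivative.eval t * Real.exp (-(a/2) * t^2)
          + p.eval t * (Real.exp (-(a/2) * t^2) * (-(a/2) * (2 * t)))) t :=
      (p.hasDerivAt t).mul h1.exp
    rw [h2.deriv]
    simp only [Polynomial.eval_add, Polynomial.eval_mul, Polynomial.eval_C, Polynomial.eval_X]
    ring

lemma pow_mul_exp_le (j : ℕ) (hb : 0 < a) (t : ℝ) :
    |t| ^ j * Real.exp (-(a/4) * t^2) ≤ 1 + j.factorial * (4/a)^j := by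
  have hexp : Real.exp (-(a/4) * t^2) ≤ 1 := by
    rw [Real.exp_le_one_iff]; nlinarith [sq_nonneg t]
  rcases le_total (|t|) 1 with h | h
  · have h1 : |t| ^ j ≤ 1 := pow_le_one₀ (abs_nonneg t) h
    have h2 : |t| ^ j * Real.exp (-(a/4) * t^2) ≤ 1 :=
      le_trans (mul_le_mul h1 hexp (Real.exp_pos _).le zero_le_one) (by norm_num)
    have : (0:ℝ) ≤ j.factorial * (4/a)^j := by positivity
    linarith
  · have h1 : |t| ^ j ≤ (t^2) ^ j := by
      calc |t|^j ≤ |t|^(2*j) := pow_le_pow_right₀ h (by omega)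
        _ = (|t|^2)^j := by rw [pow_mul]
        _ = (t^2)^j := by rw [sq_abs]
    have key : ((a/4) * t^2)^j / j.factorial ≤ Real.exp ((a/4) * t^2) :=
      Real.pow_div_factorial_le_exp _ (by positivity) j
    have hfac : (0:ℝ) < j.factorial := by positivity
    have hkey : ((a/4) * t^2)^j ≤ Real.exp ((a/4) * t^2) * j.factorial :=
      (div_le_iff₀ hfac).1 key
    have hinv : (a/4:ℝ)^j * (4/a)^j = 1 := by
      rw [← mul_pow, show (a/4) * (4/a) = 1 by field_simp, one_pow]
    have h2 : (t^2)^j ≤ j.factorial * (4/a)^j * Real.exp ((a/4) * t^2) := by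
      have h3 : (a/4:ℝ)^j * (t^2)^j ≤ Real.exp ((a/4)*t^2) * j.factorial := by
        rw [← mul_pow]; exact hkey
      calc (t^2)^j = ((a/4:ℝ)^j * (4/a)^j) * (t^2)^j := by rw [hinv, one_mul]
        _ = (4/a)^j * ((a/4:ℝ)^j * (t^2)^j) := by ring
        _ ≤ (4/a)^j * (Real.exp ((a/4)*t^2) * j.factorial) :=
            mul_le_mul_of_nonneg_left h3 (by positivity)
        _ = j.factorial * (4/a)^j * Real.exp ((a/4)*t^2) := by ring
    have h5 : |t|^j * Real.exp (-(a/4) * t^2) ≤ (t^2)^j * Real.exp (-(a/4)*t^2) :=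
      mul_le_mul_of_nonneg_right h1 (Real.exp_pos _).le
    have h6 : (t^2)^j * Real.exp (-(a/4)*t^2) ≤ j.factorial * (4/a)^j := by
      have := mul_le_mul_of_nonneg_right h2 (Real.exp_pos (-(a/4)*t^2)).le
      rwa [mul_assoc, ← Real.exp_add, show (a/4)*t^2 + (-(a/4)*t^2) = 0 by ring,
        Real.exp_zero, mul_one] at this
    linarith
lemma poly_gauss_bound (ha : 0 < a) (p : Polynomial ℝ) :
    ∃ C > 0, ∀ t, |p.eval t| * Real.exp (-(a/2) * t^2) ≤ C * Real.exp (-(a/4) * t^2) := by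
  set S : ℝ := ∑ j ∈ Finset.range (p.natDegree + 1),
    |p.coeff j| * (1 + j.factorial * (4/a)^j) with hS
  have hS0 : 0 ≤ S := Finset.sum_nonneg fun j _ => by positivity
  refine ⟨S + 1, by positivity, fun t => ?_⟩
  have hkey : |p.eval t| * Real.exp (-(a/4) * t^2) ≤ S := by
    have h1 : |p.eval t| ≤ ∑ j ∈ Finset.range (p.natDegree + 1), |p.coeff j| * |t|^j := by
      rw [Polynomial.eval_eq_sum_range]
      refine (Finset.abs_sum_le_sum_abs _ _).trans ?_
      apply Finset.sum_le_sum
      intro j _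
      rw [abs_mul, abs_pow]
    calc |p.eval t| * Real.exp (-(a/4) * t^2)
        ≤ (∑ j ∈ Finset.range (p.natDegree + 1), |p.coeff j| * |t|^j)
            * Real.exp (-(a/4) * t^2) :=
          mul_le_mul_of_nonneg_right h1 (Real.exp_pos _).le
      _ = ∑ j ∈ Finset.range (p.natDegree + 1),
            |p.coeff j| * (|t|^j * Real.exp (-(a/4) * t^2)) := by
          rw [Finset.sum_mul]; apply Finset.sum_congr rfl; intro j _; ring
      _ ≤ S := by
          apply Finset.sum_le_sum
          intro j _
          exact mul_le_mul_of_nonneg_left (pow_mul_exp_le j ha t) (abs_nonneg _)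
  have hsplit : Real.exp (-(a/2) * t^2) = Real.exp (-(a/4) * t^2) * Real.exp (-(a/4) * t^2) := by
    rw [← Real.exp_add]; ring_nf
  calc |p.eval t| * Real.exp (-(a/2) * t^2)
      = (|p.eval t| * Real.exp (-(a/4) * t^2)) * Real.exp (-(a/4) * t^2) := by
        rw [hsplit]; ring
    _ ≤ S * Real.exp (-(a/4) * t^2) :=
        mul_le_mul_of_nonneg_right hkey (Real.exp_pos _).le
    _ ≤ (S + 1) * Real.exp (-(a/4) * t^2) := by
        apply mul_le_mul_of_nonneg_right (by linarith) (Real.exp_pos _).le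

lemma gauss_deriv_bound (ha : 0 < a) (n : ℕ) :
    ∃ C > 0, ∀ t, ‖iteratedDeriv n (gauss a) t‖ ≤ C * Real.exp (-(a/4) * t^2) := by
  obtain ⟨p, hp⟩ := gauss_iteratedDeriv_poly (a := a) n
  obtain ⟨C, hC, hCb⟩ := poly_gauss_bound ha p
  refine ⟨C, hC, fun t => ?_⟩
  rw [hp t, Real.norm_eq_abs, abs_mul, abs_of_pos (Real.exp_pos _)]
  exact hCb t

lemma gauss_deriv_bound3 (ha : 0 < a) :
    ∃ C > 0, ∀ n ≤ 3, ∀ t, ‖iteratedDeriv n (gauss a) t‖ ≤ C * Real.exp (-(a/4) * t^2) := by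
  obtain ⟨C0, hC0, h0⟩ := gauss_deriv_bound ha 0
  obtain ⟨C1, hC1, h1⟩ := gauss_deriv_bound ha 1
  obtain ⟨C2, hC2, h2⟩ := gauss_deriv_bound ha 2
  obtain ⟨C3, hC3, h3⟩ := gauss_deriv_bound ha 3
  refine ⟨max (max C0 C1) (max C2 C3), by positivity, fun n hn t => ?_⟩
  have hmul : ∀ C', C' ≤ max (max C0 C1) (max C2 C3) →
      C' * Real.exp (-(a/4) * t^2) ≤ max (max C0 C1) (max C2 C3) * Real.exp (-(a/4) * t^2) :=
    fun C' h => mul_le_mul_of_nonneg_right h (Real.exp_pos _).le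
  interval_cases n
  · exact (h0 t).trans (hmul _ ((le_max_left _ _).trans (le_max_left _ _)))
  · exact (h1 t).trans (hmul _ ((le_max_right _ _).trans (le_max_left _ _)))
  · exact (h2 t).trans (hmul _ ((le_max_left _ _).trans (le_max_right _ _)))
  · exact (h3 t).trans (hmul _ ((le_max_right _ _).trans (le_max_right _ _)))
lemma integrable_expSq {d : ℕ} {c : ℝ} (hc : 0 < c) :
    Integrable (fun x : Fin d → ℝ => Real.exp (-c * ∑ i, x i ^ 2)) := by
  have h : (fun x : Fin d → ℝ => Real.exp (-c * ∑ i, x i ^ 2))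
      = fun x => ∏ i, Real.exp (-c * (x i)^2) := by
    funext x; rw [← Real.exp_sum, Finset.mul_sum]
  rw [h]
  exact MeasureTheory.Integrable.fintype_prod (f := fun _ t => Real.exp (-c * t^2))
    (fun i => integrable_exp_neg_mul_sq hc)

lemma integrable_of_le_expSq {d : ℕ} {F : (Fin d → ℝ) → ℝ} (hF : Continuous F)
    {C c : ℝ} (hc : 0 < c) (h : ∀ x, ‖F x‖ ≤ C * Real.exp (-c * ∑ i, x i ^ 2)) :
    Integrable F :=
  ((integrable_expSq hc).const_mul C).mono' hF.aestronglyMeasurable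
    (Filter.Eventually.of_forall h)

lemma integral_split {d : ℕ} (F : (Fin d → ℝ) → ℝ) (φ : ℝ → ℝ) :
    (∫ y : Fin (d+1) → ℝ, F (resL d y) * φ (y (Fin.last d)))
      = (∫ x, F x) * ∫ t, φ t := by
  have mp := volume_preserving_piFinSuccAbove (fun _ : Fin (d+1) => ℝ) (Fin.last d)
  set ε := MeasurableEquiv.piFinSuccAbove (fun _ : Fin (d+1) => ℝ) (Fin.last d) with hε
  set G : ℝ × (Fin d → ℝ) → ℝ := fun p => φ p.1 * F p.2 with hG
  have h1 : ∀ y : Fin (d+1) → ℝ, F (resL d y) * φ (y (Fin.last d)) = G (ε y) := by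
    intro y
    have h2 : (ε y).2 = resL d y := by
      funext j
      show y ((Fin.last d).succAbove j) = y j.castSucc
      rw [Fin.succAbove_last]
    have h3 : (ε y).1 = y (Fin.last d) := rfl
    rw [hG]
    dsimp only
    rw [h2, h3, mul_comm]
  calc (∫ y : Fin (d+1) → ℝ, F (resL d y) * φ (y (Fin.last d)))
      = ∫ y : Fin (d+1) → ℝ, G (ε y) := by simp_rw [h1]
    _ = ∫ p, G p := mp.integral_comp' G
    _ = (∫ x, F x) * ∫ t, φ t := by
        rw [hG, MeasureTheory.Measure.volume_eq_prod, MeasureTheory.integral_prod_mul, mul_comm]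
def gprod (d : ℕ) (f : (Fin d → ℝ) → ℝ) (a : ℝ) : (Fin (d+1) → ℝ) → ℝ :=
  fun y => f (resL d y) * gauss a (y (Fin.last d))

section core

variable {d : ℕ} {f : (Fin d → ℝ) → ℝ} {a : ℝ}

lemma gprod_contDiff (hf : ContDiff ℝ (⊤ : ℕ∞) f) : ContDiff ℝ (⊤ : ℕ∞) (gprod d f a) :=
  (hf.comp (resL d).contDiff).mul (gauss_contDiff.comp
    (ContinuousLinearMap.proj (R := ℝ) (φ := fun _ : Fin (d+1) => ℝ) (Fin.last d)).contDiff)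

lemma gprod_pos (hpos : ∀ x, 0 < f x) (ha : 0 < a) (y : Fin (d+1) → ℝ) :
    0 < gprod d f a y := mul_pos (hpos _) (gauss_pos ha _)

lemma log_gprod (hpos : ∀ x, 0 < f x) (ha : 0 < a) :
    (fun y => Real.log (gprod d f a y))
      = fun y => Real.log (f (resL d y))
          + (Real.log (gc a) + (-(a/2) * (y (Fin.last d))^2)) := by
  funext y
  show Real.log (f (resL d y) * gauss a (y (Fin.last d))) = _
  rw [Real.log_mul (hpos _).ne' (gauss_pos ha _).ne', log_gauss ha]

lemma w_diff : Differentiable ℝ (fun t : ℝ => Real.log (gc a) + (-(a/2) * t^2)) :=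
  (differentiable_const _).add ((differentiable_pow 2).const_mul _)

lemma L1 (hf : ContDiff ℝ (⊤ : ℕ∞) f) (hpos : ∀ x, 0 < f x) (ha : 0 < a) (j : Fin d) :
    pder j.castSucc (fun y => Real.log (gprod d f a y))
      = fun y => pder j (fun x => Real.log (f x)) (resL d y) := by
  have hu : ContDiff ℝ (⊤ : ℕ∞) (fun x => Real.log (f x)) := hf.log fun x => (hpos x).ne'
  rw [log_gprod hpos ha,
    pder_add (F := fun y : Fin (d+1) → ℝ => Real.log (f (resL d y)))
      (G := fun y : Fin (d+1) → ℝ => Real.log (gc a) + (-(a/2) * (y (Fin.last d))^2))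
      ((hu.differentiable (by simp)).comp (resL d).differentiable)
      (w_diff.comp (ContinuousLinearMap.proj (R := ℝ)
        (φ := fun _ : Fin (d+1) => ℝ) (Fin.last d)).differentiable) j.castSucc,
    pder_comp_cs (F := fun x => Real.log (f x)) (hu.differentiable (by simp)) j,
    pder_e_cs (φ := fun t : ℝ => Real.log (gc a) + (-(a/2) * t^2)) w_diff j]
  funext y; simp

lemma L2 (hf : ContDiff ℝ (⊤ : ℕ∞) f) (hpos : ∀ x, 0 < f x) (ha : 0 < a) :
    pder (Fin.last d) (fun y => Real.log (gprod d f a y))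
      = fun y => -(a * y (Fin.last d)) := by
  have hu : ContDiff ℝ (⊤ : ℕ∞) (fun x => Real.log (f x)) := hf.log fun x => (hpos x).ne'
  rw [log_gprod hpos ha,
    pder_add (F := fun y : Fin (d+1) → ℝ => Real.log (f (resL d y)))
      (G := fun y : Fin (d+1) → ℝ => Real.log (gc a) + (-(a/2) * (y (Fin.last d))^2))
      ((hu.differentiable (by simp)).comp (resL d).differentiable)
      (w_diff.comp (ContinuousLinearMap.proj (R := ℝ)
        (φ := fun _ : Fin (d+1) => ℝ) (Fin.last d)).differentiable) (Fin.last d),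
    pder_comp_last (F := fun x => Real.log (f x)) (hu.differentiable (by simp)),
    pder_e_last (φ := fun t : ℝ => Real.log (gc a) + (-(a/2) * t^2)) w_diff]
  funext y
  have hdw : deriv (fun t : ℝ => Real.log (gc a) + (-(a/2) * t^2)) (y (Fin.last d))
      = -(a * y (Fin.last d)) := by
    have h1 : HasDerivAt (fun t : ℝ => Real.log (gc a) + (-(a/2) * t^2))
        (-(a/2) * (2 * (y (Fin.last d)))) (y (Fin.last d)) := by
      simpa using ((hasDerivAt_pow 2 (y (Fin.last d))).const_mul
        (-(a/2))).const_add (Real.log (gc a))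
    rw [h1.deriv]; ring
  simpa using hdw

lemma G1 (hf : ContDiff ℝ (⊤ : ℕ∞) f) (hpos : ∀ x, 0 < f x) (ha : 0 < a) (i j : Fin d) :
    logHess (gprod d f a) i.castSucc j.castSucc
      = fun y => logHess f i j (resL d y) := by
  have hu : ContDiff ℝ (⊤ : ℕ∞) (fun x => Real.log (f x)) := hf.log fun x => (hpos x).ne'
  funext y
  show -(pder i.castSucc (pder j.castSucc (fun y => Real.log (gprod d f a y))) y) = _
  rw [L1 hf hpos ha j,
    pder_comp_cs (F := pder j (fun x => Real.log (f x)))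
      ((contDiff_pder hu j).differentiable (by simp)) i]
  rfl

lemma G2 (hf : ContDiff ℝ (⊤ : ℕ∞) f) (hpos : ∀ x, 0 < f x) (ha : 0 < a) (i : Fin d) :
    logHess (gprod d f a) i.castSucc (Fin.last d) = fun _ => 0 := by
  funext y
  show -(pder i.castSucc (pder (Fin.last d) (fun y => Real.log (gprod d f a y))) y) = _
  rw [L2 hf hpos ha]
  have hφ : Differentiable ℝ (fun t : ℝ => -(a * t)) := (differentiable_id.const_mul a).neg
  rw [pder_e_cs (φ := fun t : ℝ => -(a * t)) hφ i]
  simp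

lemma G3 (hf : ContDiff ℝ (⊤ : ℕ∞) f) (hpos : ∀ x, 0 < f x) (ha : 0 < a) (j : Fin d) :
    logHess (gprod d f a) (Fin.last d) j.castSucc = fun _ => 0 := by
  have hu : ContDiff ℝ (⊤ : ℕ∞) (fun x => Real.log (f x)) := hf.log fun x => (hpos x).ne'
  funext y
  show -(pder (Fin.last d) (pder j.castSucc (fun y => Real.log (gprod d f a y))) y) = _
  rw [L1 hf hpos ha j, pder_comp_last (F := pder j (fun x => Real.log (f x)))
    ((contDiff_pder hu j).differentiable (by simp))]
  simp

lemma G4 (hf : ContDiff ℝ (⊤ : ℕ∞) f) (hpos : ∀ x, 0 < f x) (ha : 0 < a) :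
    logHess (gprod d f a) (Fin.last d) (Fin.last d) = fun _ => a := by
  funext y
  show -(pder (Fin.last d) (pder (Fin.last d) (fun y => Real.log (gprod d f a y))) y) = _
  rw [L2 hf hpos ha]
  have hφ : Differentiable ℝ (fun t : ℝ => -(a * t)) := (differentiable_id.const_mul a).neg
  rw [pder_e_last (φ := fun t : ℝ => -(a * t)) hφ]
  have hd : deriv (fun t : ℝ => -(a * t)) (y (Fin.last d)) = -a := by
    simpa using (((hasDerivAt_id (y (Fin.last d))).const_mul a).neg).deriv
  simp [hd]

lemma contDiff_logHess {i j : Fin d} (hf : ContDiff ℝ (⊤ : ℕ∞) f) (hpos : ∀ x, 0 < f x) :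
    ContDiff ℝ (⊤ : ℕ∞) (logHess f i j) := by
  have hu : ContDiff ℝ (⊤ : ℕ∞) (fun x => Real.log (f x)) := hf.log fun x => (hpos x).ne'
  exact (contDiff_pder (contDiff_pder hu j) i).neg

lemma P1 (hf : ContDiff ℝ (⊤ : ℕ∞) f) (hpos : ∀ x, 0 < f x) (ha : 0 < a) (i j k : Fin d) :
    pder k.castSucc (logHess (gprod d f a) i.castSucc j.castSucc)
      = fun y => pder k (logHess f i j) (resL d y) := by
  rw [G1 hf hpos ha i j,
    pder_comp_cs (F := logHess f i j) ((contDiff_logHess hf hpos).differentiable (by simp)) k]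

lemma P2 (hf : ContDiff ℝ (⊤ : ℕ∞) f) (hpos : ∀ x, 0 < f x) (ha : 0 < a) (i j : Fin d) :
    pder (Fin.last d) (logHess (gprod d f a) i.castSucc j.castSucc) = fun _ => 0 := by
  rw [G1 hf hpos ha i j,
    pder_comp_last (F := logHess f i j) ((contDiff_logHess hf hpos).differentiable (by simp))]

lemma P3 (hf : ContDiff ℝ (⊤ : ℕ∞) f) (hpos : ∀ x, 0 < f x) (ha : 0 < a)
    (k' : Fin (d+1)) (i : Fin d) :
    pder k' (logHess (gprod d f a) i.castSucc (Fin.last d)) = fun _ => 0 := by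
  rw [G2 hf hpos ha i, pder_const k' 0]

lemma P4 (hf : ContDiff ℝ (⊤ : ℕ∞) f) (hpos : ∀ x, 0 < f x) (ha : 0 < a)
    (k' : Fin (d+1)) (j : Fin d) :
    pder k' (logHess (gprod d f a) (Fin.last d) j.castSucc) = fun _ => 0 := by
  rw [G3 hf hpos ha j, pder_const k' 0]

lemma P5 (hf : ContDiff ℝ (⊤ : ℕ∞) f) (hpos : ∀ x, 0 < f x) (ha : 0 < a) (k' : Fin (d+1)) :
    pder k' (logHess (gprod d f a) (Fin.last d) (Fin.last d)) = fun _ => 0 := by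
  rw [G4 hf hpos ha, pder_const k' a]

end core
section sums

variable {d : ℕ} {f : (Fin d → ℝ) → ℝ} {a : ℝ}

lemma sumI (hf : ContDiff ℝ (⊤ : ℕ∞) f) (hpos : ∀ x, 0 < f x) (ha : 0 < a) (y : Fin (d+1) → ℝ) :
    (∑ i : Fin (d+1), logHess (gprod d f a) i i y)
      = (∑ i : Fin d, logHess f i i (resL d y)) + a := by
  rw [Fin.sum_univ_castSucc]
  simp [G1 hf hpos ha, G4 hf hpos ha]

lemma sumQ (hf : ContDiff ℝ (⊤ : ℕ∞) f) (hpos : ∀ x, 0 < f x) (ha : 0 < a) (y : Fin (d+1) → ℝ) :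
    (∑ i : Fin (d+1), ∑ j : Fin (d+1),
        logHess (gprod d f a) i j y * logHess (gprod d f a) j i y)
      = (∑ i : Fin d, ∑ j : Fin d,
          logHess f i j (resL d y) * logHess f j i (resL d y)) + a^2 := by
  simp only [Fin.sum_univ_castSucc]
  simp [G1 hf hpos ha, G2 hf hpos ha, G3 hf hpos ha, G4 hf hpos ha]
  ring

lemma sumD1 (hf : ContDiff ℝ (⊤ : ℕ∞) f) (hpos : ∀ x, 0 < f x) (ha : 0 < a) (y : Fin (d+1) → ℝ) :
    (∑ i : Fin (d+1), ∑ j : Fin (d+1), ∑ k : Fin (d+1),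
        (pder k (logHess (gprod d f a) i j) y) ^ 2)
      = ∑ i : Fin d, ∑ j : Fin d, ∑ k : Fin d,
          (pder k (logHess f i j) (resL d y)) ^ 2 := by
  simp only [Fin.sum_univ_castSucc]
  simp [P1 hf hpos ha, P2 hf hpos ha, P3 hf hpos ha, P4 hf hpos ha, P5 hf hpos ha]

lemma sumD2 (hf : ContDiff ℝ (⊤ : ℕ∞) f) (hpos : ∀ x, 0 < f x) (ha : 0 < a) (y : Fin (d+1) → ℝ) :
    (∑ i : Fin (d+1), ∑ j : Fin (d+1), ∑ k : Fin (d+1),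
        logHess (gprod d f a) i j y * logHess (gprod d f a) j k y
          * logHess (gprod d f a) k i y)
      = (∑ i : Fin d, ∑ j : Fin d, ∑ k : Fin d,
          logHess f i j (resL d y) * logHess f j k (resL d y)
            * logHess f k i (resL d y)) + a^3 := by
  simp only [Fin.sum_univ_castSucc]
  simp [G1 hf hpos ha, G2 hf hpos ha, G3 hf hpos ha, G4 hf hpos ha]
  ring

lemma calI_gprod (hf : ContDiff ℝ (⊤ : ℕ∞) f) (hpos : ∀ x, 0 < f x) (ha : 0 < a) :
    calI (d+1) (gprod d f a) = ∫ x, ((∑ i, logHess f i i x) + a) * f x := by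
  unfold calI
  have h : (fun y => (∑ i, logHess (gprod d f a) i i y) * gprod d f a y)
      = fun y => (((∑ i, logHess f i i (resL d y)) + a) * f (resL d y))
          * gauss a (y (Fin.last d)) := by
    funext y; rw [sumI hf hpos ha y]; unfold gprod; ring
  rw [h, integral_split (fun x => ((∑ i, logHess f i i x) + a) * f x) (gauss a),
    integral_gauss ha, mul_one]

lemma calQ_gprod (hf : ContDiff ℝ (⊤ : ℕ∞) f) (hpos : ∀ x, 0 < f x) (ha : 0 < a) :
    calQ (d+1) (gprod d f a)
      = ∫ x, ((∑ i, ∑ j, logHess f i j x * logHess f j i x) + a^2) * f x := by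
  unfold calQ
  have h : (fun y => (∑ i, ∑ j, logHess (gprod d f a) i j y
        * logHess (gprod d f a) j i y) * gprod d f a y)
      = fun y => (((∑ i, ∑ j, logHess f i j (resL d y) * logHess f j i (resL d y)) + a^2)
          * f (resL d y)) * gauss a (y (Fin.last d)) := by
    funext y; rw [sumQ hf hpos ha y]; unfold gprod; ring
  rw [h, integral_split
    (fun x => ((∑ i, ∑ j, logHess f i j x * logHess f j i x) + a^2) * f x) (gauss a),
    integral_gauss ha, mul_one]

lemma calD_gprod (hf : ContDiff ℝ (⊤ : ℕ∞) f) (hpos : ∀ x, 0 < f x) (ha : 0 < a) :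
    calD (d+1) (gprod d f a)
      = ∫ x, (((∑ i, ∑ j, ∑ k, (pder k (logHess f i j) x) ^ 2)
          + 2 * ∑ i, ∑ j, ∑ k, logHess f i j x * logHess f j k x * logHess f k i x)
          + 2 * a^3) * f x := by
  unfold calD
  have h : (fun y => ((∑ i, ∑ j, ∑ k, (pder k (logHess (gprod d f a) i j) y) ^ 2)
        + 2 * ∑ i, ∑ j, ∑ k, logHess (gprod d f a) i j y * logHess (gprod d f a) j k y
            * logHess (gprod d f a) k i y) * gprod d f a y)
      = fun y => ((((∑ i, ∑ j, ∑ k, (pder k (logHess f i j) (resL d y)) ^ 2)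
          + 2 * ∑ i, ∑ j, ∑ k, logHess f i j (resL d y) * logHess f j k (resL d y)
              * logHess f k i (resL d y)) + 2 * a^3) * f (resL d y))
          * gauss a (y (Fin.last d)) := by
    funext y; rw [sumD1 hf hpos ha y, sumD2 hf hpos ha y]; unfold gprod; ring
  rw [h, integral_split
    (fun x => (((∑ i, ∑ j, ∑ k, (pder k (logHess f i j) x) ^ 2)
      + 2 * ∑ i, ∑ j, ∑ k, logHess f i j x * logHess f j k x * logHess f k i x)
      + 2 * a^3) * f x) (gauss a),
    integral_gauss ha, mul_one]

lemma int_gprod (hf : ContDiff ℝ (⊤ : ℕ∞) f) (hint : (∫ x, f x) = 1) (ha : 0 < a) :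
    (∫ y, gprod d f a y) = 1 := by
  have h : (fun y => gprod d f a y)
      = fun y => f (resL d y) * gauss a (y (Fin.last d)) := rfl
  rw [h, integral_split f (gauss a), hint, integral_gauss ha, mul_one]

end sums
section decay

variable {d : ℕ} {f : (Fin d → ℝ) → ℝ} {a : ℝ}

lemma norm_projL_le :
    ‖(ContinuousLinearMap.proj (R := ℝ) (φ := fun _ : Fin (d+1) => ℝ) (Fin.last d))‖ ≤ 1 := by
  refine ContinuousLinearMap.opNorm_le_bound _ zero_le_one (fun y => ?_)
  rw [one_mul]
  exact norm_le_pi_norm y (Fin.last d)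

lemma gprod_decay (hf : ContDiff ℝ (⊤ : ℕ∞) f) (ha : 0 < a)
    {C c : ℝ} (hc : 0 < c)
    (hbd : ∀ n ≤ 3, ∀ x, ‖iteratedFDeriv ℝ n f x‖ ≤ C * Real.exp (-c * ∑ i, x i ^ 2)) :
    ∃ C' > (0:ℝ), ∃ c' > (0:ℝ), ∀ n ≤ 3, ∀ y : Fin (d+1) → ℝ,
      ‖iteratedFDeriv ℝ n (gprod d f a) y‖ ≤ C' * Real.exp (-c' * ∑ i, y i ^ 2) := by
  obtain ⟨Cγ, hCγ, hγ⟩ := gauss_deriv_bound3 ha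
  have hC0 : 0 ≤ C := by
    have := (norm_nonneg (iteratedFDeriv ℝ 0 f 0)).trans (hbd 0 (by norm_num) 0)
    nlinarith [Real.exp_pos (-c * ∑ i : Fin d, (0:Fin d → ℝ) i ^ 2)]
  set c' : ℝ := min c (a/4) with hc'
  have hc'0 : 0 < c' := lt_min hc (by positivity)
  refine ⟨8 * (C+1) * Cγ, by positivity, c', hc'0, fun n hn y => ?_⟩
  set E : ℝ := Real.exp (-c' * ∑ i : Fin (d+1), y i ^ 2) with hE
  have hE0 : 0 < E := Real.exp_pos _
  -- bound on factors
  have hprod : ∀ {k : ℕ}, (∏ _i : Fin k, ‖resL d‖) ≤ 1 :=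
    fun {k} => Finset.prod_le_one (fun _ _ => norm_nonneg _) (fun _ _ => norm_resL_le)
  have hprod2 : ∀ {k : ℕ}, (∏ _i : Fin k,
      ‖(ContinuousLinearMap.proj (R := ℝ) (φ := fun _ : Fin (d+1) => ℝ) (Fin.last d))‖) ≤ 1 :=
    fun {k} => Finset.prod_le_one (fun _ _ => norm_nonneg _) (fun _ _ => norm_projL_le)
  have hexpsplit : Real.exp (-c * ∑ i : Fin d, (resL d y i) ^ 2)
        * Real.exp (-(a/4) * (y (Fin.last d))^2) ≤ E := by
    rw [← Real.exp_add, hE]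
    apply Real.exp_le_exp.2
    have hsum : (∑ i : Fin (d+1), y i ^ 2)
        = (∑ i : Fin d, (resL d y i) ^ 2) + (y (Fin.last d))^2 := by
      rw [Fin.sum_univ_castSucc]; rfl
    rw [hsum]
    have h1 : 0 ≤ ∑ i : Fin d, (resL d y i) ^ 2 := Finset.sum_nonneg fun i _ => sq_nonneg _
    have h2 : (0:ℝ) ≤ (y (Fin.last d))^2 := sq_nonneg _
    have h3 : c' ≤ c := min_le_left _ _
    have h4 : c' ≤ a/4 := min_le_right _ _
    nlinarith
  have hF1 : ∀ k ≤ 3, ‖iteratedFDeriv ℝ k (fun y : Fin (d+1) → ℝ => f (resL d y)) y‖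
      ≤ C * Real.exp (-c * ∑ i : Fin d, (resL d y i) ^ 2) := by
    intro k hk
    have he : iteratedFDeriv ℝ k (f ∘ (resL d)) y
        = (iteratedFDeriv ℝ k f (resL d y)).compContinuousLinearMap fun _ => resL d :=
      (resL d).iteratedFDeriv_comp_right hf y (by exact_mod_cast le_top)
    calc ‖iteratedFDeriv ℝ k (fun y : Fin (d+1) → ℝ => f (resL d y)) y‖
        = ‖(iteratedFDeriv ℝ k f (resL d y)).compContinuousLinearMap fun _ => resL d‖ := by
          rw [← he]; rfl
      _ ≤ ‖iteratedFDeriv ℝ k f (resL d y)‖ * ∏ _i : Fin k, ‖resL d‖ :=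
          ContinuousMultilinearMap.norm_compContinuousLinearMap_le _ _
      _ ≤ ‖iteratedFDeriv ℝ k f (resL d y)‖ * 1 :=
          mul_le_mul_of_nonneg_left hprod (norm_nonneg _)
      _ = ‖iteratedFDeriv ℝ k f (resL d y)‖ := mul_one _
      _ ≤ C * Real.exp (-c * ∑ i : Fin d, (resL d y i) ^ 2) := by
          simpa using hbd k hk (resL d y)
  have hF2 : ∀ k ≤ 3, ‖iteratedFDeriv ℝ k
        (fun y : Fin (d+1) → ℝ => gauss a (y (Fin.last d))) y‖
      ≤ Cγ * Real.exp (-(a/4) * (y (Fin.last d))^2) := by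
    intro k hk
    have he : iteratedFDeriv ℝ k (gauss a ∘
        (ContinuousLinearMap.proj (R := ℝ) (φ := fun _ : Fin (d+1) => ℝ) (Fin.last d))) y
        = (iteratedFDeriv ℝ k (gauss a) (y (Fin.last d))).compContinuousLinearMap
            fun _ => (ContinuousLinearMap.proj (Fin.last d)) :=
      ContinuousLinearMap.iteratedFDeriv_comp_right _ gauss_contDiff y (by exact_mod_cast le_top)
    calc ‖iteratedFDeriv ℝ k (fun y : Fin (d+1) → ℝ => gauss a (y (Fin.last d))) y‖
        = ‖(iteratedFDeriv ℝ k (gauss a) (y (Fin.last d))).compContinuousLinearMap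
            fun _ => (ContinuousLinearMap.proj (R := ℝ)
              (φ := fun _ : Fin (d+1) => ℝ) (Fin.last d))‖ := by
          rw [← he]; rfl
      _ ≤ ‖iteratedFDeriv ℝ k (gauss a) (y (Fin.last d))‖ * ∏ _i : Fin k,
            ‖(ContinuousLinearMap.proj (R := ℝ)
              (φ := fun _ : Fin (d+1) => ℝ) (Fin.last d))‖ :=
          ContinuousMultilinearMap.norm_compContinuousLinearMap_le _ _
      _ ≤ ‖iteratedFDeriv ℝ k (gauss a) (y (Fin.last d))‖ * 1 :=
          mul_le_mul_of_nonneg_left hprod2 (norm_nonneg _)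
      _ = ‖iteratedDeriv k (gauss a) (y (Fin.last d))‖ := by
          rw [mul_one, norm_iteratedFDeriv_eq_norm_iteratedDeriv]
      _ ≤ Cγ * Real.exp (-(a/4) * (y (Fin.last d))^2) := hγ k hk _
  have hmul := norm_iteratedFDeriv_mul_le (𝕜 := ℝ) (A := ℝ)
    (f := fun y : Fin (d+1) → ℝ => f (resL d y))
    (g := fun y : Fin (d+1) → ℝ => gauss a (y (Fin.last d)))
    (N := ((⊤ : ℕ∞) : WithTop ℕ∞)) (hf.comp (resL d).contDiff)
    (gauss_contDiff.comp (ContinuousLinearMap.proj (R := ℝ)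
      (φ := fun _ : Fin (d+1) => ℝ) (Fin.last d)).contDiff) y (n := n) (by exact_mod_cast le_top)
  have hgp : iteratedFDeriv ℝ n (gprod d f a) y
      = iteratedFDeriv ℝ n (fun y : Fin (d+1) → ℝ =>
          (fun y : Fin (d+1) → ℝ => f (resL d y)) y
            * (fun y : Fin (d+1) → ℝ => gauss a (y (Fin.last d))) y) y := rfl
  rw [hgp]
  refine hmul.trans ?_
  have hterm : ∀ i ∈ Finset.range (n+1),
      (n.choose i : ℝ) * ‖iteratedFDeriv ℝ i (fun y : Fin (d+1) → ℝ => f (resL d y)) y‖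
        * ‖iteratedFDeriv ℝ (n-i) (fun y : Fin (d+1) → ℝ => gauss a (y (Fin.last d))) y‖
      ≤ (n.choose i : ℝ) * ((C+1) * Cγ * E) := by
    intro i hi
    have hi3 : i ≤ 3 := le_trans (Nat.lt_succ_iff.1 (Finset.mem_range.1 hi)) hn
    have hni3 : n - i ≤ 3 := le_trans (Nat.sub_le _ _) hn
    have h1 := hF1 i hi3
    have h2 := hF2 (n-i) hni3
    have hb : ‖iteratedFDeriv ℝ i (fun y : Fin (d+1) → ℝ => f (resL d y)) y‖
        * ‖iteratedFDeriv ℝ (n-i) (fun y : Fin (d+1) → ℝ => gauss a (y (Fin.last d))) y‖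
        ≤ (C+1) * Cγ * E := by
      calc ‖iteratedFDeriv ℝ i (fun y : Fin (d+1) → ℝ => f (resL d y)) y‖
          * ‖iteratedFDeriv ℝ (n-i) (fun y : Fin (d+1) → ℝ => gauss a (y (Fin.last d))) y‖
          ≤ (C * Real.exp (-c * ∑ i : Fin d, (resL d y i) ^ 2))
            * (Cγ * Real.exp (-(a/4) * (y (Fin.last d))^2)) :=
            mul_le_mul h1 h2 (norm_nonneg _) (by positivity)
        _ = (C * Cγ) * (Real.exp (-c * ∑ i : Fin d, (resL d y i) ^ 2)
            * Real.exp (-(a/4) * (y (Fin.last d))^2)) := by ring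
        _ ≤ (C * Cγ) * E := mul_le_mul_of_nonneg_left hexpsplit (by positivity)
        _ ≤ (C+1) * Cγ * E := by nlinarith
    rw [mul_assoc]
    exact mul_le_mul_of_nonneg_left hb (Nat.cast_nonneg _)
  refine (Finset.sum_le_sum hterm).trans ?_
  rw [← Finset.sum_mul]
  have hchoose : (∑ i ∈ Finset.range (n+1), (n.choose i : ℝ)) = 2^n := by
    rw [← Nat.cast_sum]
    rw [Nat.sum_range_choose]
    push_cast
    ring
  rw [hchoose]
  have h2n : (2:ℝ)^n ≤ 8 := by
    calc (2:ℝ)^n ≤ 2^3 := pow_le_pow_right₀ (by norm_num) hn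
      _ = 8 := by norm_num
  calc (2:ℝ)^n * ((C+1) * Cγ * E) ≤ 8 * ((C+1) * Cγ * E) :=
        mul_le_mul_of_nonneg_right h2n (by positivity)
    _ = 8 * (C+1) * Cγ * E := by ring

end decay
section admiss

variable {d : ℕ} {f : (Fin d → ℝ) → ℝ} {a : ℝ}

lemma adm_gprod (had : Admissible d f) (ha : 0 < a) :
    Admissible (d+1) (gprod d f a) := by
  obtain ⟨hf, hpos, hint, ⟨C, hC, c, hc, hbd⟩, hQ⟩ := had
  have hfint : Integrable f := by
    apply integrable_of_le_expSq hf.continuous hc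
    intro x; have := hbd 0 (by norm_num) x
    rwa [norm_iteratedFDeriv_zero] at this
  have hQint : Integrable (fun x => (∑ i, ∑ j, logHess f i j x * logHess f j i x) * f x) := by
    by_contra h
    have h0 : calQ d f = 0 := integral_undef h
    rw [h0] at hQ; exact lt_irrefl 0 hQ
  refine ⟨gprod_contDiff hf, gprod_pos hpos ha, int_gprod hf hint ha, ?_, ?_⟩
  · obtain ⟨C', hC', c', hc', hbd'⟩ := gprod_decay hf ha hc (fun n hn x => hbd n hn x)
    exact ⟨C', hC', c', hc', hbd'⟩
  · rw [calQ_gprod hf hpos ha]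
    have he : (fun x => ((∑ i, ∑ j, logHess f i j x * logHess f j i x) + a^2) * f x)
        = fun x => (∑ i, ∑ j, logHess f i j x * logHess f j i x) * f x + a^2 * f x := by
      funext x; ring
    rw [he, MeasureTheory.integral_add hQint (hfint.const_mul _),
      MeasureTheory.integral_const_mul, hint, mul_one]
    have hQ' : 0 < calQ d f := hQ
    have ha2 : 0 < a^2 := by positivity
    have : (∫ x, (∑ i, ∑ j, logHess f i j x * logHess f j i x) * f x) = calQ d f := rfl
    rw [this]
    linarith

end admiss
end ThetaAux

open ThetaAux Topology

/-- Monotonicity in the dimension: `θ_{d+1}* ≤ θ_d*` for every `d ≥ 1`. -/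
theorem thetaStar_monotone : ∀ d : ℕ, 1 ≤ d → thetaStar (d + 1) ≤ thetaStar d := by
  intro d _
  refine le_sInf ?_
  rintro b ⟨f, had, rfl⟩
  have hfad := had
  obtain ⟨hf, hpos, hint, ⟨C, hC, c, hc, hbd⟩, hQpos⟩ := had
  have hfint : Integrable f := by
    apply integrable_of_le_expSq hf.continuous hc
    intro x; have := hbd 0 (by norm_num) x
    rwa [norm_iteratedFDeriv_zero] at this
  have hQint : Integrable (fun x => (∑ i, ∑ j, logHess f i j x * logHess f j i x) * f x) := by
    by_contra h
    have h0 : calQ d f = 0 := integral_undef h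
    rw [h0] at hQpos; exact lt_irrefl 0 hQpos
  have hsinf : ∀ a : ℝ, 0 < a → thetaStar (d+1) ≤
      ((calI (d+1) (gprod d f a) * calD (d+1) (gprod d f a)
        / (calQ (d+1) (gprod d f a))^2 : ℝ) : EReal) :=
    fun a ha => sInf_le ⟨gprod d f a, adm_gprod hfad ha, rfl⟩
  have hQg : ∀ a : ℝ, 0 < a → calQ (d+1) (gprod d f a) = calQ d f + a^2 := by
    intro a ha
    rw [calQ_gprod hf hpos ha]
    have he : (fun x => ((∑ i, ∑ j, logHess f i j x * logHess f j i x) + a^2) * f x)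
        = fun x => (∑ i, ∑ j, logHess f i j x * logHess f j i x) * f x + a^2 * f x := by
      funext x; ring
    rw [he, MeasureTheory.integral_add hQint (hfint.const_mul _),
      MeasureTheory.integral_const_mul, hint, mul_one]
    rfl
  by_cases hIint : Integrable (fun x => (∑ i, logHess f i i x) * f x)
  · by_cases hDint : Integrable (fun x => ((∑ i, ∑ j, ∑ k, (pder k (logHess f i j) x)^2)
        + 2 * ∑ i, ∑ j, ∑ k, logHess f i j x * logHess f j k x * logHess f k i x) * f x)
    · have hIg : ∀ a : ℝ, 0 < a → calI (d+1) (gprod d f a) = calI d f + a := by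
        intro a ha
        rw [calI_gprod hf hpos ha]
        have he : (fun x => ((∑ i, logHess f i i x) + a) * f x)
            = fun x => (∑ i, logHess f i i x) * f x + a * f x := by funext x; ring
        rw [he, MeasureTheory.integral_add hIint (hfint.const_mul _),
          MeasureTheory.integral_const_mul, hint, mul_one]
        rfl
      have hDg : ∀ a : ℝ, 0 < a → calD (d+1) (gprod d f a) = calD d f + 2*a^3 := by
        intro a ha
        rw [calD_gprod hf hpos ha]
        have he : (fun x => (((∑ i, ∑ j, ∑ k, (pder k (logHess f i j) x) ^ 2)
            + 2 * ∑ i, ∑ j, ∑ k, logHess f i j x * logHess f j k x * logHess f k i x)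
            + 2 * a^3) * f x)
            = fun x => ((∑ i, ∑ j, ∑ k, (pder k (logHess f i j) x) ^ 2)
            + 2 * ∑ i, ∑ j, ∑ k, logHess f i j x * logHess f j k x * logHess f k i x) * f x
              + (2*a^3) * f x := by funext x; ring
        rw [he, MeasureTheory.integral_add hDint (hfint.const_mul _),
          MeasureTheory.integral_const_mul, hint, mul_one]
        rfl
      have hQ0 : calQ d f ≠ 0 := ne_of_gt hQpos
      have hcont : Tendsto (fun a : ℝ => (calI d f + a) * (calD d f + 2*a^3)
          / (calQ d f + a^2)^2) (𝓝[>] 0)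
          (𝓝 (calI d f * calD d f / (calQ d f)^2)) := by
        have h1 : ContinuousAt (fun a : ℝ => (calI d f + a) * (calD d f + 2*a^3)
            / (calQ d f + a^2)^2) 0 := by
          apply ContinuousAt.div
          · fun_prop
          · fun_prop
          · norm_num
            exact hQ0
        have h2 := h1.tendsto
        have h3 : (calI d f + 0) * (calD d f + 2*0^3) / (calQ d f + 0^2)^2
            = calI d f * calD d f / (calQ d f)^2 := by norm_num
        rw [h3] at h2
        exact tendsto_nhdsWithin_of_tendsto_nhds h2
      have hco : Tendsto (fun a : ℝ => (((calI d f + a) * (calD d f + 2*a^3)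
          / (calQ d f + a^2)^2 : ℝ) : EReal)) (𝓝[>] 0)
          (𝓝 ((calI d f * calD d f / (calQ d f)^2 : ℝ) : EReal)) :=
        (continuous_coe_real_ereal.continuousAt).tendsto.comp hcont
      refine ge_of_tendsto hco ?_
      filter_upwards [self_mem_nhdsWithin] with a ha
      have h := hsinf a ha
      rwa [hIg a ha, hDg a ha, hQg a ha] at h
    · have hDf0 : calD d f = 0 := integral_undef hDint
      have hDg0 : calD (d+1) (gprod d f 1) = 0 := by
        rw [calD_gprod hf hpos one_pos]
        apply integral_undef
        intro hcon
        apply hDint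
        have he : (fun x => ((∑ i, ∑ j, ∑ k, (pder k (logHess f i j) x)^2)
            + 2 * ∑ i, ∑ j, ∑ k, logHess f i j x * logHess f j k x * logHess f k i x) * f x)
            = fun x => ((((∑ i, ∑ j, ∑ k, (pder k (logHess f i j) x) ^ 2)
            + 2 * ∑ i, ∑ j, ∑ k, logHess f i j x * logHess f j k x * logHess f k i x)
            + 2 * (1:ℝ)^3) * f x) - (2 * (1:ℝ)^3) * f x := by funext x; ring
        rw [he]
        exact hcon.sub (hfint.const_mul _)
      have h := hsinf 1 one_pos
      have h0 : (calI (d+1) (gprod d f 1) * calD (d+1) (gprod d f 1)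
          / (calQ (d+1) (gprod d f 1))^2 : ℝ) = 0 := by rw [hDg0]; simp
      have h0' : (calI d f * calD d f / (calQ d f)^2 : ℝ) = 0 := by rw [hDf0]; simp
      rw [h0] at h
      rw [h0']
      exact h
  · have hIf0 : calI d f = 0 := integral_undef hIint
    have hIg0 : calI (d+1) (gprod d f 1) = 0 := by
      rw [calI_gprod hf hpos one_pos]
      apply integral_undef
      intro hcon
      apply hIint
      have he : (fun x => (∑ i, logHess f i i x) * f x)
          = fun x => (((∑ i, logHess f i i x) + 1) * f x) - 1 * f x := by funext x; ring
      rw [he]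
      exact hcon.sub (hfint.const_mul _)
    have h := hsinf 1 one_pos
    have h0 : (calI (d+1) (gprod d f 1) * calD (d+1) (gprod d f 1)
        / (calQ (d+1) (gprod d f 1))^2 : ℝ) = 0 := by rw [hIg0]; simp
    have h0' : (calI d f * calD d f / (calQ d f)^2 : ℝ) = 0 := by rw [hIf0]; simp
    rw [h0] at h
    rw [h0']
    exact h
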